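/- Let ν be a σ-finite reference measure on a measurable space E, π a strictly positive probability density with respect to ν, and q(·|·) a strictly positive Markov transition density with respect to ν. Define the Metropolis–Hastings kernel K(θ, A) = ∫_A q(ψ|θ) α(ψ|θ) dν(ψ) + r(θ) δ_θ(A), where α(ψ|θ) = min{1, (π(ψ) q(θ|ψ)) / (π(θ) q(ψ|θ))} and r(θ) = 1 − ∫ q(ψ|θ) α(ψ|θ) dν(ψ) is the rejection probability. Then K is in detailed balance with the measure μ having density π with respect to ν. (Detailed balance of Algorithm 1.) -/
import Mathlib


open MeasureTheory ProbabilityTheory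
open scoped ENNReal

/-- The Metropolis–Hastings acceptance probability
`α(ψ|θ) = min{1, π(ψ) q(θ|ψ) / (π(θ) q(ψ|θ))}`, where `q θ ψ` denotes `q(ψ|θ)`. -/
noncomputable def mhAccept {E : Type*} (π : E → ℝ) (q : E → E → ℝ) (θ ψ : E) : ℝ :=
  min 1 (π ψ * q ψ θ / (π θ * q θ ψ))

/-- The Metropolis–Hastings transition kernel
`K(θ, A) = ∫_A q(ψ|θ) α(ψ|θ) dν(ψ) + r(θ) δ_θ(A)`, where
`r(θ) = 1 − ∫ q(ψ|θ) α(ψ|θ) dν(ψ)` is the rejection probability. -/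
noncomputable def mhKernel {E : Type*} [MeasurableSpace E] (ν : Measure E)
    (π : E → ℝ) (q : E → E → ℝ) (θ : E) : Measure E :=
  ν.withDensity (fun ψ => ENNReal.ofReal (q θ ψ * mhAccept π q θ ψ)) +
    (1 - ∫⁻ ψ, ENNReal.ofReal (q θ ψ * mhAccept π q θ ψ) ∂ν) • Measure.dirac θ

/-- **Detailed balance of Algorithm 1 (Metropolis–Hastings).** Let `ν` be a σ-finite
reference measure, `π` a strictly positive probability density with respect to `ν`, and
`q` a strictly positive Markov transition density with respect to `ν`. Then the
Metropolis–Hastings kernel is in detailed balance with the measure having density `π`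
with respect to `ν`: for all measurable sets `A, B`,
`∫_A K(θ, B) dμ(θ) = ∫_B K(θ, A) dμ(θ)` where `μ = ν.withDensity π`. -/
theorem mhKernel_detailedBalance
    {E : Type*} [MeasurableSpace E] (ν : Measure E) [SigmaFinite ν]
    (π : E → ℝ) (q : E → E → ℝ)
    (hπpos : ∀ x, 0 < π x) (hπmeas : Measurable π)
    (hπdens : ∫⁻ x, ENNReal.ofReal (π x) ∂ν = 1)
    (hqpos : ∀ x y, 0 < q x y) (hqmeas : Measurable (Function.uncurry q))
    (hqdens : ∀ θ, ∫⁻ ψ, ENNReal.ofReal (q θ ψ) ∂ν = 1) :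
    ∀ A B : Set E, MeasurableSet A → MeasurableSet B →
      ∫⁻ θ in A, mhKernel ν π q θ B ∂(ν.withDensity fun x => ENNReal.ofReal (π x)) =
        ∫⁻ θ in B, mhKernel ν π q θ A ∂(ν.withDensity fun x => ENNReal.ofReal (π x)) := by
  -- notation
  set f : E → E → ℝ≥0∞ := fun θ ψ => ENNReal.ofReal (q θ ψ * mhAccept π q θ ψ) with hfdef
  set G : E → E → ℝ≥0∞ :=
    fun θ ψ => ENNReal.ofReal (min (π θ * q θ ψ) (π ψ * q ψ θ)) with hGdef
  set r : E → ℝ≥0∞ := fun θ => 1 - ∫⁻ ψ, f θ ψ ∂ν with hrdef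
  -- measurability of f
  have hmeas_f : Measurable (Function.uncurry f) := by
    apply Measurable.ennreal_ofReal
    have h1 : Measurable fun p : E × E => q p.1 p.2 := hqmeas
    have h2 : Measurable fun p : E × E => q p.2 p.1 := hqmeas.comp measurable_swap
    exact h1.mul (measurable_const.min
      (((hπmeas.comp measurable_snd).mul h2).div ((hπmeas.comp measurable_fst).mul h1)))
  have hmeas_G : Measurable (Function.uncurry G) := by
    apply Measurable.ennreal_ofReal
    have h1 : Measurable fun p : E × E => q p.1 p.2 := hqmeas
    have h2 : Measurable fun p : E × E => q p.2 p.1 := hqmeas.comp measurable_swap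
    exact ((hπmeas.comp measurable_fst).mul h1).min ((hπmeas.comp measurable_snd).mul h2)
  have hmeas_f2 : ∀ θ, Measurable (f θ) := fun θ =>
    hmeas_f.comp measurable_prodMk_left
  have hmeas_r : Measurable r := by
    exact measurable_const.sub (Measurable.lintegral_prod_right hmeas_f)
  -- key pointwise identity
  have key : ∀ θ ψ, ENNReal.ofReal (π θ) * f θ ψ = G θ ψ := by
    intro θ ψ
    have ha : (0:ℝ) < π θ * q θ ψ := mul_pos (hπpos θ) (hqpos θ ψ)
    rw [hfdef, hGdef]
    simp only [mhAccept]
    rw [← ENNReal.ofReal_mul (hπpos θ).le]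
    congr 1
    rw [← mul_assoc,
      mul_min_of_nonneg _ _ ha.le, mul_one,
      mul_div_cancel₀ _ ha.ne']
  have Gsymm : ∀ θ ψ, G θ ψ = G ψ θ := by
    intro θ ψ; rw [hGdef]; simp only [min_comm]
  -- kernel applied to a measurable set
  have happly : ∀ (θ : E) (S : Set E), MeasurableSet S →
      mhKernel ν π q θ S = ∫⁻ ψ in S, f θ ψ ∂ν + r θ * S.indicator 1 θ := by
    intro θ S hS
    rw [mhKernel]
    simp only [Measure.add_apply, Measure.smul_apply, smul_eq_mul]
    rw [withDensity_apply _ hS, Measure.dirac_apply' _ hS]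
  -- the generic computation of one side
  have main : ∀ A B : Set E, MeasurableSet A → MeasurableSet B →
      ∫⁻ θ in A, mhKernel ν π q θ B ∂(ν.withDensity fun x => ENNReal.ofReal (π x)) =
        (∫⁻ θ in A, ∫⁻ ψ in B, G θ ψ ∂ν ∂ν) +
          ∫⁻ θ in A ∩ B, ENNReal.ofReal (π θ) * r θ ∂ν := by
    intro A B hA hB
    have hmg : Measurable fun θ => mhKernel ν π q θ B := by
      have h1 : Measurable fun θ => ∫⁻ ψ in B, f θ ψ ∂ν :=
        Measurable.lintegral_prod_right hmeas_f
      have h2 : Measurable fun θ => r θ * B.indicator 1 θ :=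
        hmeas_r.mul (measurable_one.indicator hB)
      have := h1.add h2
      convert this using 1
      funext θ; exact happly θ B hB
    rw [setLIntegral_withDensity_eq_setLIntegral_mul ν hπmeas.ennreal_ofReal hmg hA]
    simp only [Pi.mul_apply]
    have : ∀ θ, ENNReal.ofReal (π θ) * mhKernel ν π q θ B =
        (∫⁻ ψ in B, G θ ψ ∂ν) +
          (ENNReal.ofReal (π θ) * r θ) * B.indicator 1 θ := by
      intro θ
      rw [happly θ B hB, mul_add, mul_assoc]
      congr 1
      rw [← lintegral_const_mul _ (hmeas_f2 θ)]
      exact lintegral_congr fun ψ => key θ ψ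
    simp only [this]
    rw [lintegral_add_left]
    · congr 1
      have : ∀ θ, (ENNReal.ofReal (π θ) * r θ) * B.indicator 1 θ =
          B.indicator (fun θ => ENNReal.ofReal (π θ) * r θ) θ := by
        intro θ
        by_cases h : θ ∈ B <;> simp [h]
      simp only [this]
      rw [lintegral_indicator hB, Measure.restrict_restrict hB, Set.inter_comm B A]
    · exact Measurable.lintegral_prod_right hmeas_G
  intro A B hA hB
  rw [main A B hA hB, main B A hB hA]
  congr 1
  · rw [lintegral_lintegral_swap hmeas_G.aemeasurable]
    refine lintegral_congr fun ψ => lintegral_congr fun θ => Gsymm θ ψ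
  · rw [Set.inter_comm]
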